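/- Let U ⊆ F^d be open, x_0 ∈ U, let f : U → F^n satisfy the nondegeneracy conditions (II)–(IV), and let θ : U → F satisfy condition (VI). Then for every sufficiently small neighbourhood V ⊆ U of x_0 there exists M_0 > 1 such that inf over all (a, a_0) ∈ F^{n+1} with ‖a‖ ≥ M_0 of sup_{x ∈ V} |a_0 + a·f(x) + θ(x)| is strictly positive. -/
import Mathlib


/-!
Common setup for Khintchine–Groshev type theorems over the function field
`F = 𝔽_q((X⁻¹))`, following Das–Ganguly,
"Inhomogeneous Khintchine-Groshev type theorems on manifolds over function fields".
-/

open Filter MeasureTheory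
open scoped Topology ENNReal Classical

noncomputable section

namespace KGFF

variable (Fq : Type) [Field Fq] [Fintype Fq]

/-- The local field `F = 𝔽_q((X⁻¹))`, realized as the field of formal Laurent
series in the variable `T = X⁻¹`. -/
abbrev F : Type := LaurentSeries Fq

/-- `q`, the cardinality of the coefficient field. -/
def qq : ℕ := Fintype.card Fq

variable {Fq}

/-- The absolute value `|a| = q ^ (deg a)`.  In the variable `T = X⁻¹`,
the degree of `a` (the largest power of `X` occurring) is `-(a.order)`. -/
def absv (a : F Fq) : ℝ :=
  if a = 0 then 0 else (qq Fq : ℝ) ^ (-(a.order))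

/-- The element `X` of `F` (the inverse of the Laurent-series variable `T`). -/
def Xvar : F Fq := HahnSeries.single (-1 : ℤ) 1

/-- The embedding of `Λ = 𝔽_q[X]` into `F`, sending `X` to `Xvar`. -/
def emb (p : Polynomial Fq) : F Fq := Polynomial.aeval (Xvar : F Fq) p

/-- The absolute value of a polynomial, viewed inside `F`. -/
def pabs (p : Polynomial Fq) : ℝ := absv (emb p)

/-- The supremum norm on `F^k`. -/
def snorm {k : ℕ} (x : Fin k → F Fq) : ℝ := ⨆ i, absv (x i)

/-- The supremum norm of a vector of polynomials. -/
def pnorm {k : ℕ} (a : Fin k → Polynomial Fq) : ℝ := ⨆ i, pabs (a i)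

/-- Open ball in `F^d` for the supremum norm. -/
def Ball {d : ℕ} (x₀ : Fin d → F Fq) (r : ℝ) : Set (Fin d → F Fq) :=
  {x | snorm (x - x₀) < r}

/-- Closed ball in `F^d` for the supremum norm. -/
def CBall {d : ℕ} (x₀ : Fin d → F Fq) (r : ℝ) : Set (Fin d → F Fq) :=
  {x | snorm (x - x₀) ≤ r}

/-- `F` carries the Borel σ-algebra of its valuation topology. -/
instance : MeasurableSpace (F Fq) := borel _

/-- A Haar measure on `F^d`: a translation invariant measure, normalized so that
the closed unit ball has measure `1`. -/
def IsHaar {d : ℕ} (μ : Measure (Fin d → F Fq)) : Prop :=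
  (∀ (v : Fin d → F Fq) (s : Set (Fin d → F Fq)), μ ((fun x => v + x) ⁻¹' s) = μ s) ∧
    μ {x : Fin d → F Fq | snorm x ≤ 1} = 1

/-- Partial derivative in the `j`-th coordinate, as a limit of difference quotients. -/
def pderiv {d : ℕ} (j : Fin d) (g : (Fin d → F Fq) → F Fq) (x : Fin d → F Fq) : F Fq :=
  limUnder (𝓝[≠] (0 : F Fq)) fun t => (g (Function.update x j (x j + t)) - g x) / t

/-- The supremum norm of the gradient. -/
def gradNorm {d : ℕ} (g : (Fin d → F Fq) → F Fq) (x : Fin d → F Fq) : ℝ :=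
  snorm fun j => pderiv j g x

/-- The supremum norm of the skew gradient `∇̃(g₁,g₂) = g₁∇g₂ - g₂∇g₁`. -/
def skewGradNorm {d : ℕ} (g₁ g₂ : (Fin d → F Fq) → F Fq) (x : Fin d → F Fq) : ℝ :=
  snorm fun j => g₁ x * pderiv j g₂ x - g₂ x * pderiv j g₁ x

/-- `g` is analytic on `S`: around every point of `S` it is the sum of a convergent
power series. -/
def IsAnalyticOn {d : ℕ} (S : Set (Fin d → F Fq)) (g : (Fin d → F Fq) → F Fq) : Prop :=
  ∀ x₀ ∈ S, ∃ r : ℝ, 0 < r ∧ ∃ c : (Fin d →₀ ℕ) → F Fq,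
    ∀ x : Fin d → F Fq, snorm (x - x₀) < r →
      HasSum (fun m : Fin d →₀ ℕ => c m * ∏ i : Fin d, (x i - x₀ i) ^ m i) (g x)

/-- `g` is analytic on `U` and extends analytically to the boundary of `U`. -/
def AnalyticWithBoundary {d : ℕ} (U : Set (Fin d → F Fq)) (g : (Fin d → F Fq) → F Fq) : Prop :=
  ∃ g' : (Fin d → F Fq) → F Fq, IsAnalyticOn (closure U) g' ∧ Set.EqOn g' g U

/-- All second-order difference quotients of `g` are bounded by `1` in absolute value
on `U` (condition (IV)/(VI) of Das–Ganguly). -/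
def SecondDiffQuotBound {d : ℕ} (U : Set (Fin d → F Fq)) (g : (Fin d → F Fq) → F Fq) : Prop :=
  (∀ i j : Fin d, i ≠ j → ∀ x : Fin d → F Fq, ∀ s₁ s₂ t₁ t₂ : F Fq,
      s₁ ≠ s₂ → t₁ ≠ t₂ →
      (∀ s ∈ ({s₁, s₂} : Set (F Fq)), ∀ t ∈ ({t₁, t₂} : Set (F Fq)),
        Function.update (Function.update x i s) j t ∈ U) →
      absv ((((g (Function.update (Function.update x i s₁) j t₁)
                - g (Function.update (Function.update x i s₂) j t₁))
              - (g (Function.update (Function.update x i s₁) j t₂)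
                - g (Function.update (Function.update x i s₂) j t₂)))
            / ((s₁ - s₂) * (t₁ - t₂)))) ≤ 1) ∧
  (∀ i : Fin d, ∀ x : Fin d → F Fq, ∀ s₁ s₂ s₃ : F Fq,
      s₁ ≠ s₂ → s₁ ≠ s₃ → s₂ ≠ s₃ →
      (∀ s ∈ ({s₁, s₂, s₃} : Set (F Fq)), Function.update x i s ∈ U) →
      absv (((g (Function.update x i s₁) - g (Function.update x i s₃)) / (s₁ - s₃)
            - (g (Function.update x i s₂) - g (Function.update x i s₃)) / (s₂ - s₃))
            / (s₁ - s₂)) ≤ 1)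

/-- The restrictions of `1, f 0, …, f (n-1)` to any open subset of `U` are linearly
independent over `F` (condition (III)). -/
def IndepOnOpens {d n : ℕ} (U : Set (Fin d → F Fq))
    (f : Fin n → (Fin d → F Fq) → F Fq) : Prop :=
  ∀ V : Set (Fin d → F Fq), IsOpen V → V.Nonempty → V ⊆ U →
    ∀ (c₀ : F Fq) (c : Fin n → F Fq),
      (∀ x ∈ V, c₀ + ∑ i, c i * f i x = 0) → c₀ = 0 ∧ ∀ i, c i = 0

/-- Conditions (II), (III) and (IV) of Das–Ganguly on the map `f : U → F^n`. -/
structure Nondeg {d n : ℕ} (U : Set (Fin d → F Fq))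
    (f : Fin n → (Fin d → F Fq) → F Fq) : Prop where
  analytic : ∀ i, AnalyticWithBoundary U (f i)
  first_coord : ∀ (hn : 0 < n) (hd : 0 < d), ∀ x ∈ U, f ⟨0, hn⟩ x = x ⟨0, hd⟩
  indep : IndepOnOpens U f
  bound : ∀ x ∈ U, ∀ i, absv (f i x) ≤ 1
  grad_bound : ∀ x ∈ U, ∀ i, gradNorm (f i) x ≤ 1
  second_bound : ∀ i, SecondDiffQuotBound U (f i)

/-- Condition (VI) of Das–Ganguly on the inhomogeneous part `θ : U → F`. -/
structure ThetaCond {d : ℕ} (U : Set (Fin d → F Fq))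
    (θ : (Fin d → F Fq) → F Fq) : Prop where
  analytic : AnalyticWithBoundary U θ
  bound : ∀ x ∈ U, absv (θ x) ≤ 1
  grad_bound : ∀ x ∈ U, gradNorm θ x ≤ 1
  second_bound : SecondDiffQuotBound U θ

/-- `U` is an open box in `F^d` with respect to the sup norm. -/
def IsOpenBox {d : ℕ} (U : Set (Fin d → F Fq)) : Prop :=
  ∃ (x₀ : Fin d → F Fq) (r : Fin d → ℝ), (∀ i, 0 < r i) ∧
    U = {x | ∀ i, absv (x i - x₀ i) < r i}

/-- A multivariable approximating function `Ψ : Λⁿ → ℝ₊`. -/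
def IsApproxFun {n : ℕ} (Ψ : (Fin n → Polynomial Fq) → ℝ) : Prop :=
  (∀ a, 0 < Ψ a) ∧
    ∀ a b : Fin n → Polynomial Fq, (∀ i, pabs (a i) ≤ pabs (b i)) → Ψ b ≤ Ψ a

/-- The set `W_f(Ψ,θ)` of points `x ∈ U` at which `f x` is `(Ψ,θ)`-approximable:
there are infinitely many `(a, a₀) ∈ (Λⁿ \ {0}) × Λ` with
`|f(x)·a + a₀ + θ(x)| < Ψ(a)`. -/
def Wset {d n : ℕ} (U : Set (Fin d → F Fq)) (f : Fin n → (Fin d → F Fq) → F Fq)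
    (Ψ : (Fin n → Polynomial Fq) → ℝ) (θ : (Fin d → F Fq) → F Fq) :
    Set (Fin d → F Fq) :=
  {x ∈ U | {p : (Fin n → Polynomial Fq) × Polynomial Fq |
      p.1 ≠ 0 ∧
        absv ((∑ i, emb (p.1 i) * f i x) + emb p.2 + θ x) < Ψ p.1}.Infinite}

/-- `g` is `(C,α)`-good on `V` with respect to the measure `μ`:
for every ball `B ⊆ V` and every `ε > 0`,
`μ {x ∈ B : g x < ε} ≤ C (ε / ‖g‖_B)^α μ B`. -/
def IsCAGoodOn {d : ℕ} (μ : Measure (Fin d → F Fq)) (C α : ℝ)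
    (V : Set (Fin d → F Fq)) (g : (Fin d → F Fq) → ℝ) : Prop :=
  ∀ (x₀ : Fin d → F Fq) (r : ℝ), 0 < r → Ball x₀ r ⊆ V →
    ∀ ε : ℝ, 0 < ε →
      μ {x ∈ Ball x₀ r | g x < ε} ≤
        ENNReal.ofReal C *
          (ENNReal.ofReal ε / ENNReal.ofReal (sSup (g '' Ball x₀ r))) ^ α *
          μ (Ball x₀ r)

/-- The sup norm of the wedge `a ∧ a'` of two vectors of `Fⁿ`. -/
def wedgeNorm {n : ℕ} (a a' : Fin n → F Fq) : ℝ :=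
  ⨆ p : Fin n × Fin n, absv (a p.1 * a' p.2 - a p.2 * a' p.1)

/-- `a, a'` are orthonormal: `‖a‖ = ‖a'‖ = ‖a ∧ a'‖ = 1`. -/
def Orthonormal2 {n : ℕ} (a a' : Fin n → F Fq) : Prop :=
  snorm a = 1 ∧ snorm a' = 1 ∧ wedgeNorm a a' = 1

/-- Diameter (in `ℝ≥0∞`) of a subset of `F^d` with respect to the sup norm. -/
def ediam {d : ℕ} (S : Set (Fin d → F Fq)) : ℝ≥0∞ :=
  ⨆ x ∈ S, ⨆ y ∈ S, ENNReal.ofReal (snorm (x - y))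

/-- The `s`-dimensional Hausdorff measure (as an outer measure) on `F^d` with respect
to the sup norm. -/
def hausdorffMeas {d : ℕ} (s : ℝ) (A : Set (Fin d → F Fq)) : ℝ≥0∞ :=
  ⨆ (δ : ℝ≥0∞) (_ : 0 < δ),
    ⨅ (t : ℕ → Set (Fin d → F Fq)) (_ : A ⊆ ⋃ k, t k) (_ : ∀ k, ediam (t k) ≤ δ),
      ∑' k, ⨆ (_ : (t k).Nonempty), ediam (t k) ^ s

/-- `max(0, t₁, …, tₙ)`; for integers `tᵢ ≥ 1` this is `maxᵢ tᵢ`. -/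
def zmax {n : ℕ} (tv : Fin n → ℤ) : ℤ := Finset.univ.fold max 0 tv

/-- The set `Φ^f(t,δ)` of `x ∈ U` for which there are `a ∈ Λⁿ \ {0}`, `a₀ ∈ Λ` with
`‖a‖ = q^t` and `|f(x)·a + a₀| < δ q^{-nt}`. -/
def PhiSet {d n : ℕ} (U : Set (Fin d → F Fq)) (f : Fin n → (Fin d → F Fq) → F Fq)
    (t : ℕ) (δ : ℝ) : Set (Fin d → F Fq) :=
  {x ∈ U | ∃ (a : Fin n → Polynomial Fq) (a₀ : Polynomial Fq), a ≠ 0 ∧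
      pnorm a = (qq Fq : ℝ) ^ t ∧
      absv ((∑ i, emb (a i) * f i x) + emb a₀) < δ * ((qq Fq : ℝ) ^ (n * t))⁻¹}

/-- `f` is nice at `x₀ ∈ U` (with respect to the Haar measure `μ`). -/
def NiceAt {d n : ℕ} (μ : Measure (Fin d → F Fq)) (U : Set (Fin d → F Fq))
    (f : Fin n → (Fin d → F Fq) → F Fq) (x₀ : Fin d → F Fq) : Prop :=
  ∃ U₀ : Set (Fin d → F Fq), IsOpen U₀ ∧ x₀ ∈ U₀ ∧ U₀ ⊆ U ∧
    ∃ δ w : ℝ, 0 < δ ∧ δ < 1 ∧ 0 < w ∧ w < 1 ∧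
      ∃ r₀ : ℝ, 0 < r₀ ∧ ∀ (y : Fin d → F Fq) (r : ℝ), 0 < r → r ≤ r₀ → Ball y r ⊆ U₀ →
        Filter.limsup (fun t : ℕ => μ (PhiSet U f t δ ∩ Ball y r)) Filter.atTop ≤
          ENNReal.ofReal w * μ (Ball y r)

/-- `f` is nice: it is nice at almost every point of `U`. -/
def Nice {d n : ℕ} (μ : Measure (Fin d → F Fq)) (U : Set (Fin d → F Fq))
    (f : Fin n → (Fin d → F Fq) → F Fq) : Prop :=
  μ {x ∈ U | ¬ NiceAt μ U f x} = 0


lemma one_lt_q : (1:ℝ) < (qq Fq : ℝ) := by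
  have : 1 < Fintype.card Fq := Fintype.one_lt_card
  exact_mod_cast this

lemma q_pos : (0:ℝ) < (qq Fq : ℝ) := lt_trans one_pos one_lt_q

lemma absv_nonneg (a : F Fq) : 0 ≤ absv a := by
  unfold absv; split
  · exact le_refl _
  · positivity

lemma absv_zero : absv (0 : F Fq) = 0 := if_pos rfl

lemma absv_pos {a : F Fq} (h : a ≠ 0) : 0 < absv a := by
  unfold absv; rw [if_neg h]
  exact zpow_pos (q_pos (Fq := Fq)) _

lemma absv_mul (a b : F Fq) : absv (a * b) = absv a * absv b := by
  by_cases ha : a = 0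
  · simp [ha, absv_zero]
  by_cases hb : b = 0
  · simp [hb, absv_zero]
  have hab : a * b ≠ 0 := mul_ne_zero ha hb
  unfold absv
  rw [if_neg ha, if_neg hb, if_neg hab, HahnSeries.order_mul ha hb, neg_add,
    zpow_add₀ (ne_of_gt (q_pos (Fq := Fq)))]

lemma absv_neg (a : F Fq) : absv (-a) = absv a := by
  unfold absv
  rw [HahnSeries.order_neg]
  simp

lemma absv_add_le (a b : F Fq) : absv (a + b) ≤ max (absv a) (absv b) := by
  by_cases ha : a = 0
  · simp [ha, le_max_right]
  by_cases hb : b = 0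
  · simp [hb, le_max_left]
  by_cases hab : a + b = 0
  · rw [hab, absv_zero]
    exact le_max_of_le_left (absv_nonneg a)
  have hmin : min a.order b.order ≤ (a + b).order := HahnSeries.min_order_le_order_add hab
  have h1 : -( (a+b).order ) ≤ max (-(a.order)) (-(b.order)) := by
    omega
  unfold absv
  rw [if_neg ha, if_neg hb, if_neg hab]
  calc (qq Fq : ℝ) ^ (-(a+b).order) ≤ (qq Fq : ℝ) ^ (max (-(a.order)) (-(b.order))) := by
        apply zpow_le_zpow_right₀ (le_of_lt one_lt_q) h1
    _ ≤ max ((qq Fq : ℝ) ^ (-(a.order))) ((qq Fq : ℝ) ^ (-(b.order))) := by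
        rcases le_total (-(a.order)) (-(b.order)) with h | h
        · rw [max_eq_right h]; exact le_max_right _ _
        · rw [max_eq_left h]; exact le_max_left _ _

lemma absv_sum_le {ι : Type*} (s : Finset ι) (g : ι → F Fq) {B : ℝ} (hB : 0 ≤ B)
    (h : ∀ i ∈ s, absv (g i) ≤ B) : absv (∑ i ∈ s, g i) ≤ B := by
  classical
  induction s using Finset.induction_on with
  | empty => simpa [absv_zero] using hB
  | @insert x s' hx ih =>
    rw [Finset.sum_insert hx]
    exact le_trans (absv_add_le _ _) (max_le (h x (by simp)) (ih fun i hi => h i (by simp [hi])))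

lemma absv_le_snorm {k : ℕ} (x : Fin k → F Fq) (i : Fin k) : absv (x i) ≤ snorm x :=
  le_ciSup (Set.Finite.bddAbove (Set.finite_range fun j => absv (x j))) i

lemma snorm_le {k : ℕ} (x : Fin k → F Fq) {B : ℝ} (hB : 0 ≤ B)
    (h : ∀ i, absv (x i) ≤ B) : snorm x ≤ B := by
  rcases isEmpty_or_nonempty (Fin k) with he | hne
  · simp [snorm, Real.iSup_of_isEmpty, hB]
  · exact ciSup_le h

lemma snorm_nonneg {k : ℕ} (x : Fin k → F Fq) : 0 ≤ snorm x := by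
  rcases isEmpty_or_nonempty (Fin k) with he | hne
  · simp [snorm, Real.iSup_of_isEmpty]
  · exact le_trans (absv_nonneg _) (absv_le_snorm x (Classical.arbitrary _))


/-- **Proposition.** For `f` satisfying (II)–(IV) and `θ` satisfying (VI), for every
sufficiently small neighbourhood `V` of `x₀` there exists `M₀ > 1` such that
`inf_{‖a‖ ≥ M₀} sup_{x ∈ V} |a₀ + a·f(x) + θ(x)| > 0`. -/
theorem inf_sup_positive
    (Fq : Type) [Field Fq] [Fintype Fq] (d n : ℕ)
    (U : Set (Fin d → F Fq)) (hU : IsOpen U) (x₀ : Fin d → F Fq) (hx₀ : x₀ ∈ U)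
    (f : Fin n → (Fin d → F Fq) → F Fq) (hf : Nondeg U f)
    (θ : (Fin d → F Fq) → F Fq) (hθ : ThetaCond U θ) :
    ∃ V₀ : Set (Fin d → F Fq), IsOpen V₀ ∧ x₀ ∈ V₀ ∧ V₀ ⊆ U ∧
      ∀ V : Set (Fin d → F Fq), IsOpen V → x₀ ∈ V → V ⊆ V₀ →
        ∃ M₀ : ℝ, 1 < M₀ ∧ ∃ c : ℝ, 0 < c ∧
          ∀ (a : Fin n → F Fq) (a₀ : F Fq), M₀ ≤ snorm a →
            c ≤ sSup ((fun x => absv (a₀ + (∑ i, a i * f i x) + θ x)) '' V) := by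
  classical
  refine ⟨U, hU, hx₀, subset_rfl, ?_⟩
  intro V hVopen hx₀V hVU
  set vc : (Fin d → F Fq) → (Fin (n+1) → F Fq) := fun x => Fin.cons 1 (fun i => f i x) with hvc
  set S : Set (Fin (n+1) → F Fq) := vc '' V with hS
  have hVne : V.Nonempty := ⟨x₀, hx₀V⟩
  set e : Fin (n+1) → (Fin (n+1) → F Fq) := fun k => fun j => if k = j then 1 else 0 with he
  have hspan : Submodule.span (F Fq) S = ⊤ := by
    by_contra hne
    obtain ⟨φ, hφ0, hker⟩ := Submodule.exists_le_ker_of_lt_top _ (lt_top_iff_ne_top.mpr hne)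
    have hvan : ∀ x ∈ V, φ (vc x) = 0 := fun x hx =>
      hker (Submodule.subset_span ⟨x, hx, rfl⟩)
    have hexp : ∀ v : Fin (n+1) → F Fq, φ v = ∑ k, v k * φ (e k) := by
      intro v
      rw [LinearMap.pi_apply_eq_sum_univ φ v]
      simp only [smul_eq_mul, he]
    have h0 : ∀ x ∈ V, φ (e 0) + ∑ i, (fun i => φ (e (Fin.succ i))) i * f i x = 0 := by
      intro x hx
      have hz := hvan x hx
      rw [hexp, Fin.sum_univ_succ] at hz
      simp only [hvc, Fin.cons_zero, Fin.cons_succ, one_mul] at hz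
      rw [← hz]
      congr 1
      exact Finset.sum_congr rfl fun i _ => mul_comm _ _
    obtain ⟨hc0, hc⟩ := hf.indep V hVopen hVne hVU (φ (e 0)) (fun i => φ (e (Fin.succ i))) h0
    refine hφ0 (LinearMap.ext fun v => ?_)
    rw [hexp]
    have hek : ∀ k : Fin (n+1), φ (e k) = 0 := by
      intro k
      refine Fin.cases ?_ ?_ k
      · exact hc0
      · exact hc
    simp [hek]
  have hrep : ∀ k : Fin (n+1), ∃ c : (Fin (n+1) → F Fq) →₀ (F Fq),
      ↑c.support ⊆ S ∧ (c.sum fun mi r => r • mi) = e k :=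
    fun k => Submodule.mem_span_set.mp (by rw [hspan]; trivial)
  choose D hDsupp hDsum using hrep
  set K : ℝ := 1 + ∑ k, ∑ v ∈ (D k).support, absv (D k v) with hK
  have hsum_nonneg : ∀ k : Fin (n+1), 0 ≤ ∑ v ∈ (D k).support, absv (D k v) :=
    fun k => Finset.sum_nonneg fun v _ => absv_nonneg _
  have hK1 : 1 ≤ K := le_add_of_nonneg_right (Finset.sum_nonneg fun k _ => hsum_nonneg k)
  have hKpos : (0:ℝ) < K := lt_of_lt_of_le one_pos hK1
  have hKb : ∀ k, ∀ v ∈ (D k).support, absv (D k v) ≤ K := by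
    intro k v hv
    calc absv (D k v) ≤ ∑ w ∈ (D k).support, absv (D k w) :=
          Finset.single_le_sum (fun w _ => absv_nonneg _) hv
      _ ≤ ∑ k', ∑ w ∈ (D k').support, absv (D k' w) :=
          Finset.single_le_sum (fun k' _ => hsum_nonneg k') (Finset.mem_univ k)
      _ ≤ K := by rw [hK]; linarith
  refine ⟨2 * K, by linarith, 1, one_pos, ?_⟩
  intro a a₀ ha
  set cv : Fin (n+1) → F Fq := Fin.cons a₀ a with hcv
  set P : (Fin (n+1) → F Fq) → F Fq := fun v => ∑ k, cv k * v k with hP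
  set t : Finset (Fin (n+1) → F Fq) := Finset.univ.biUnion (fun k => (D k).support) with ht
  have htne : t.Nonempty := by
    by_contra hte
    rw [Finset.not_nonempty_iff_eq_empty] at hte
    have h0 : (D 0).support = ∅ := by
      by_contra hcon
      obtain ⟨v, hv⟩ := Finset.nonempty_iff_ne_empty.mpr hcon
      have hvt : v ∈ t := Finset.mem_biUnion.mpr ⟨0, Finset.mem_univ _, hv⟩
      rw [hte] at hvt; exact absurd hvt (Finset.notMem_empty v)
    have hz := hDsum 0
    rw [Finsupp.sum, h0, Finset.sum_empty] at hz
    have h1 := congrFun hz 0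
    simp [he] at h1
  obtain ⟨v₀, hv₀t, hmax⟩ := Finset.exists_max_image t (fun v => absv (P v)) htne
  have hcoord : ∀ k, absv (cv k) ≤ K * absv (P v₀) := by
    intro k
    have hrepr : cv k = ∑ v ∈ (D k).support, D k v * P v := by
      have h1 : P (e k) = cv k := by
        simp [hP, he, mul_ite]
      have h2 : P ((D k).sum fun mi r => r • mi) =
          ∑ v ∈ (D k).support, D k v * P v := by
        rw [Finsupp.sum]
        calc P (∑ v ∈ (D k).support, D k v • v)
            = ∑ j, cv j * ∑ v ∈ (D k).support, D k v * v j := by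
              simp [hP, Finset.sum_apply, Pi.smul_apply, smul_eq_mul]
          _ = ∑ j, ∑ v ∈ (D k).support, cv j * (D k v * v j) := by
              simp [Finset.mul_sum]
          _ = ∑ v ∈ (D k).support, ∑ j, cv j * (D k v * v j) := Finset.sum_comm
          _ = ∑ v ∈ (D k).support, D k v * P v := by
              refine Finset.sum_congr rfl fun v _ => ?_
              rw [hP, Finset.mul_sum]
              exact Finset.sum_congr rfl fun j _ => by ring
      rw [← h1, ← hDsum k, h2]
    rw [hrepr]
    refine absv_sum_le _ _ (mul_nonneg (le_of_lt hKpos) (absv_nonneg _)) ?_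
    intro v hv
    rw [absv_mul]
    exact mul_le_mul (hKb k v hv)
      (hmax v (Finset.mem_biUnion.mpr ⟨k, Finset.mem_univ _, hv⟩))
      (absv_nonneg _) (le_of_lt hKpos)
  have hsc : snorm cv ≤ K * absv (P v₀) :=
    snorm_le _ (mul_nonneg (le_of_lt hKpos) (absv_nonneg _)) hcoord
  have hac : snorm a ≤ snorm cv :=
    snorm_le _ (snorm_nonneg cv) (fun i => by
      have h := absv_le_snorm cv (Fin.succ i)
      simpa [hcv, Fin.cons_succ] using h)
  have h2 : 2 ≤ absv (P v₀) := by
    have h2K : 2 * K ≤ K * absv (P v₀) := le_trans ha (le_trans hac hsc)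
    nlinarith
  obtain ⟨k, -, hv₀k⟩ := Finset.mem_biUnion.mp hv₀t
  obtain ⟨x, hxV, hvx⟩ := hDsupp k hv₀k
  have hPv : P v₀ = a₀ + ∑ i, a i * f i x := by
    rw [← hvx]
    show ∑ k, cv k * (vc x) k = _
    rw [Fin.sum_univ_succ]
    simp [hvc, hcv, Fin.cons_zero, Fin.cons_succ]
  set A := a₀ + ∑ i, a i * f i x with hA
  have h2A : 2 ≤ absv A := hPv ▸ h2
  have hθ1 : absv (θ x) ≤ 1 := hθ.bound x (hVU hxV)
  have hAθ : 2 ≤ absv (A + θ x) := by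
    by_contra hcon
    push_neg at hcon
    have key : absv A ≤ max (absv (A + θ x)) (absv (θ x)) := by
      have h := absv_add_le (A + θ x) (-(θ x))
      rw [add_neg_cancel_right, absv_neg] at h
      exact h
    have : absv A < 2 :=
      lt_of_le_of_lt key (max_lt hcon (lt_of_le_of_lt hθ1 one_lt_two))
    linarith
  have hbdd : BddAbove ((fun x => absv (a₀ + (∑ i, a i * f i x) + θ x)) '' V) := by
    refine ⟨max (absv a₀) (max (snorm a) 1), ?_⟩
    rintro r ⟨y, hyV, rfl⟩
    have h1 : absv (∑ i, a i * f i y) ≤ snorm a := by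
      refine absv_sum_le _ _ (snorm_nonneg a) ?_
      intro i _
      rw [absv_mul]
      calc absv (a i) * absv (f i y) ≤ snorm a * 1 :=
            mul_le_mul (absv_le_snorm a i) (hf.bound y (hVU hyV) i)
              (absv_nonneg _) (snorm_nonneg a)
        _ = snorm a := mul_one _
    have hθy : absv (θ y) ≤ 1 := hθ.bound y (hVU hyV)
    calc absv (a₀ + (∑ i, a i * f i y) + θ y)
        ≤ max (absv (a₀ + ∑ i, a i * f i y)) (absv (θ y)) := absv_add_le _ _
      _ ≤ max (absv a₀) (max (snorm a) 1) := by
          refine max_le (le_trans (absv_add_le _ _) ?_) ?_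
          · exact max_le (le_max_left _ _)
              (le_max_of_le_right (le_max_of_le_left h1))
          · exact le_trans hθy (le_max_of_le_right (le_max_right _ _))
  have hmem : absv (a₀ + (∑ i, a i * f i x) + θ x) ∈
      ((fun x => absv (a₀ + (∑ i, a i * f i x) + θ x)) '' V) := ⟨x, hxV, rfl⟩
  calc (1:ℝ) ≤ absv (a₀ + (∑ i, a i * f i x) + θ x) := by
        rw [show a₀ + (∑ i, a i * f i x) + θ x = A + θ x from by rw [hA]]
        linarith
    _ ≤ _ := le_csSup hbdd hmem

end KGFF
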